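/- In the packing LP setting with the columns partitioned into K ≥ m one-dimensional classes, assume general position, B ≥ m, and ε ∈ (0,1]. For v ∈ L^K with all B_{i,j}^{v_j} nonempty, let w̲_i^v be the union over j of the inclusion-wise smallest element of B_{i,j}^{v_j}, and w̄_i^v the union over j of the inclusion-wise largest element of B_{i,j}^{v_j} (these exist and are unique since each B_{i,j}^{v_j} is a chain of prefixes of C_j). Define W_i^+ = { w̲_i^v : v ∈ L^K, B_i^v ∩ X ≠ ∅, a_i(w̲_i^v) ≥ (1−ε/2)B } and W_i^- = { w̄_i^v : v ∈ L^K, B_i^v ∩ X ≠ ∅, a_i(w̄_i^v) ≤ (1−3ε/2)B }. Then W_i^+ is a witness set for X_i^+ and W_i^- is a witness set for X_i^-. -/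

import Mathlib

/-!
Raising the price of row `i` shrinks a classification `x(p)` one tight item at a time; in general
position at most `m ≤ B` items, each of weight at most `1`, leave at once, so every `x ∈ X_i^+`
contains some `x' ∈ X` with `B ≤ a_i(x') < 2B`. Classwise occupations lying in the same grid
interval differ by at most a factor `1 + ε/4` and an additive `εB/(4K)`; summed over the `K`
classes, the smallest element of the box of `x'` (resp. the largest element of the box of
`x ∈ X_i^-`) has occupation within a factor `1 + ε/4` and an additive `εB/4` of `x'` (resp. `x`),
and it is contained in `x'` (resp. contains `x`) class by class.
-/

open Finset

noncomputable section

/-- The linear classification induced by dual prices `p`. -/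
def classif {n m : ℕ} (π : Fin n → ℝ) (a : Fin n → Fin m → ℝ) (p : Fin m → ℝ) :
    Finset (Fin n) :=
  Finset.univ.filter fun t => ∑ i, p i * a t i < π t

/-- Occupation of row `i` by the index set `x`. -/
def occ {n m : ℕ} (a : Fin n → Fin m → ℝ) (i : Fin m) (x : Finset (Fin n)) : ℝ :=
  ∑ t ∈ x, a t i

section Partition

variable {α ι : Type*} [DecidableEq α] {C : ι → Finset α}

lemma sum_inter_eq_sum_of_existsUnique [Fintype ι] {M : Type*} [AddCommMonoid M]
    (hC : ∀ u, ∃! j, u ∈ C j) (S : Finset α) (g : α → M) :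
    ∑ j, ∑ t ∈ S ∩ C j, g t = ∑ t ∈ S, g t := by
  classical
  choose f hf hf_unique using hC
  rw [← Finset.sum_fiberwise S f g]
  refine Finset.sum_congr rfl fun j _ => Finset.sum_congr ?_ fun _ _ => rfl
  ext u
  simp only [Finset.mem_inter, Finset.mem_filter]
  exact and_congr_right fun _ => ⟨fun h => (hf_unique u j h).symm, fun h => h ▸ hf u⟩

lemma subset_of_forall_inter_subset (hC : ∀ u, ∃ j, u ∈ C j) {S T : Finset α}
    (h : ∀ j, S ∩ C j ⊆ T) : S ⊆ T := fun u hu =>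
  let ⟨j, hj⟩ := hC u
  h j (Finset.mem_inter.mpr ⟨hu, hj⟩)

end Partition

/-- The intervals `I_ℓ`, with `c = εB/(4K)` and `δ = ε/4`. -/
def gridInterval (c δ : ℝ) (ℓ : ℕ) : Set ℝ :=
  if ℓ = 0 then Set.Ico 0 c else Set.Ico (c * (1 + δ) ^ (ℓ - 1)) (c * (1 + δ) ^ ℓ)

section Grid

variable {c δ r : ℝ}

lemma exists_mem_gridInterval (hc : 0 < c) (hδ : 0 < δ) (hr : 0 ≤ r) :
    ∃ ℓ, r ∈ gridInterval c δ ℓ := by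
  rcases lt_or_ge r c with hrc | hrc
  · exact ⟨0, by simp [gridInterval, hr, hrc]⟩
  obtain ⟨ℓ, hlo, hhi⟩ :=
    exists_nat_pow_near ((one_le_div hc).mpr hrc) (lt_add_of_pos_right 1 hδ)
  refine ⟨ℓ + 1, ?_⟩
  simp only [gridInterval, Nat.add_one_ne_zero, if_false, Nat.add_sub_cancel]
  exact ⟨by rwa [le_div_iff₀' hc] at hlo, by rwa [div_lt_iff₀' hc] at hhi⟩

lemma le_of_mem_gridInterval (hc : 0 < c) (hδ : 0 < δ) {ℓ N : ℕ}
    (hr : r ∈ gridInterval c δ ℓ) (hN : r < c * (1 + δ) ^ N) : ℓ ≤ N := by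
  unfold gridInterval at hr
  split_ifs at hr with hℓ
  · omega
  · have := lt_of_mul_lt_mul_left (hr.1.trans_lt hN) hc.le
    have := (pow_lt_pow_iff_right₀ (lt_add_of_pos_right 1 hδ)).mp this
    omega

lemma le_mul_add_of_mem_gridInterval (hc : 0 ≤ c) (hδ : 0 ≤ δ) {ℓ : ℕ} {r₁ r₂ : ℝ}
    (h₁ : r₁ ∈ gridInterval c δ ℓ) (h₂ : r₂ ∈ gridInterval c δ ℓ) :
    r₁ ≤ (1 + δ) * r₂ + c := by
  unfold gridInterval at h₁ h₂
  split_ifs at h₁ h₂ with hℓ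
  · nlinarith [h₁.2, h₂.1]
  · obtain ⟨k, rfl⟩ := Nat.exists_eq_add_one_of_ne_zero hℓ
    simp only [Nat.add_sub_cancel] at h₁ h₂
    calc r₁ ≤ (1 + δ) * (c * (1 + δ) ^ k) := by
          rw [pow_succ, ← mul_assoc, mul_comm _ (1 + δ)] at h₁; exact h₁.2.le
      _ ≤ (1 + δ) * r₂ + c := by nlinarith [h₂.1]

lemma exists_gridInterval_levels {ι : Type*} (hc : 0 < c) (hδ : 0 < δ) {r : ι → ℝ}
    (hr : ∀ j, 0 ≤ r j) {N : ℕ} (hN : ∀ j, r j < c * (1 + δ) ^ N) :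
    ∃ v : ι → ℕ, ∀ j, v j ≤ N ∧ r j ∈ gridInterval c δ (v j) := by
  choose v hv using fun j => exists_mem_gridInterval hc hδ (hr j)
  exact ⟨v, fun j => ⟨le_of_mem_gridInterval hc hδ (hv j) (hN j), hv j⟩⟩

lemma sum_le_of_forall_mem_gridInterval {α ι : Type*} [Fintype ι] [DecidableEq α]
    {C : ι → Finset α} (hC : ∀ u, ∃! j, u ∈ C j) (hc : 0 ≤ c) (hδ : 0 ≤ δ) (g : α → ℝ) {v : ι → ℕ}
    {S W : Finset α} (hS : ∀ j, ∑ t ∈ S ∩ C j, g t ∈ gridInterval c δ (v j))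
    (hW : ∀ j, ∑ t ∈ W ∩ C j, g t ∈ gridInterval c δ (v j)) :
    ∑ t ∈ S, g t ≤ (1 + δ) * ∑ t ∈ W, g t + Fintype.card ι * c := by
  rw [← sum_inter_eq_sum_of_existsUnique hC S, ← sum_inter_eq_sum_of_existsUnique hC W,
    Finset.mul_sum, Finset.card_univ.symm, ← nsmul_eq_mul, ← Finset.sum_const,
    ← Finset.sum_add_distrib]
  exact Finset.sum_le_sum fun j _ => le_mul_add_of_mem_gridInterval hc hδ (hS j) (hW j)

end Grid

lemma le_pow_natCeil_logb {b x : ℝ} (hb : 1 < b) (hx : 0 < x) :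
    x ≤ b ^ ⌈Real.logb b x⌉₊ := by
  rw [← Real.rpow_natCast, ← Real.logb_le_iff_le_rpow hb hx]
  exact Nat.le_ceil _

lemma two_mul_le_mul_pow_natCeil_logb {ε B : ℝ} {K : ℕ} (hε : 0 < ε) (hB : 0 < B) (hK : 0 < K) :
    2 * B ≤ ε * B / (4 * K) * (1 + ε / 4) ^ ⌈Real.logb (1 + ε / 4) (8 * K / ε)⌉₊ :=
  calc 2 * B = ε * B / (4 * K) * (8 * K / ε) := by field_simp; ring
    _ ≤ _ := by gcongr; exact le_pow_natCeil_logb (by linarith) (by positivity)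

section Sweep

variable {n m : ℕ} {π : Fin n → ℝ} {a : Fin n → Fin m → ℝ} {i : Fin m}

lemma mem_classif {p : Fin m → ℝ} {t : Fin n} : t ∈ classif π a p ↔ p ⬝ᵥ a t < π t := by
  simp [classif, dotProduct]

/-- Raise the price of row `i` until the first item of `x(p)` using row `i` becomes tight;
every item that leaves is tight at the new prices. -/
lemma exists_classif_ssubset_card_sdiff_le
    (hgen : ∀ p : Fin m → ℝ, (Finset.univ.filter fun t => π t = p ⬝ᵥ a t).card ≤ m)
    (hai : ∀ t, 0 ≤ a t i) {p : Fin m → ℝ} (hp : 0 ≤ p) {t₀ : Fin n}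
    (ht₀ : t₀ ∈ classif π a p) (ht₀i : 0 < a t₀ i) :
    ∃ q, 0 ≤ q ∧ classif π a q ⊂ classif π a p ∧
      (classif π a p \ classif π a q).card ≤ m := by
  set T := (classif π a p).filter fun t => 0 < a t i
  set ratio : Fin n → ℝ := fun t => (π t - p ⬝ᵥ a t) / a t i
  obtain ⟨t₁, ht₁T, ht₁min⟩ :=
    T.exists_min_image ratio ⟨t₀, Finset.mem_filter.mpr ⟨ht₀, ht₀i⟩⟩
  obtain ⟨ht₁, ht₁i⟩ := Finset.mem_filter.mp ht₁T
  set s := ratio t₁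
  have hs : 0 < s := div_pos (sub_pos.mpr (mem_classif.mp ht₁)) ht₁i
  set q := p + Pi.single i s
  have hq : ∀ t, q ⬝ᵥ a t = p ⬝ᵥ a t + s * a t i := fun t => by
    simp only [q, add_dotProduct, single_dotProduct]
  have hqp : classif π a q ⊆ classif π a p := fun t ht => by
    rw [mem_classif, hq] at ht
    exact mem_classif.mpr (by nlinarith [hai t])
  have ht₁q : t₁ ∉ classif π a q := by
    rw [mem_classif, hq, div_mul_cancel₀ _ ht₁i.ne']
    simp
  have htight : classif π a p \ classif π a q ⊆
      Finset.univ.filter fun t => π t = q ⬝ᵥ a t := fun t ht => by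
    obtain ⟨htp, htq⟩ := Finset.mem_sdiff.mp ht
    rw [mem_classif] at htp htq
    rw [hq, not_lt] at htq
    have hti : 0 < a t i := by
      by_contra! h
      nlinarith [hai t]
    have := ht₁min t (Finset.mem_filter.mpr ⟨mem_classif.mpr htp, hti⟩)
    rw [le_div_iff₀ hti] at this
    simp only [Finset.mem_filter, Finset.mem_univ, true_and, hq]
    linarith
  exact ⟨q, add_nonneg hp (Pi.single_nonneg.mpr hs.le),
    Finset.ssubset_iff_of_subset hqp |>.mpr ⟨t₁, ht₁, ht₁q⟩,
    (Finset.card_le_card htight).trans (hgen q)⟩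

lemma occ_le_occ_add_card_sdiff (hai : ∀ t, a t i ≤ 1) {x y : Finset (Fin n)} (h : y ⊆ x) :
    occ a i x ≤ occ a i y + (x \ y).card := by
  rw [occ, occ, ← Finset.sum_sdiff h, add_comm]
  gcongr
  simpa using Finset.sum_le_card_nsmul (x \ y) (a · i) 1 fun t _ => hai t

theorem exists_classif_subset_occ_mem_Ico
    (hgen : ∀ p : Fin m → ℝ, (Finset.univ.filter fun t => π t = p ⬝ᵥ a t).card ≤ m)
    (hai : ∀ t, a t i ∈ Set.Icc (0 : ℝ) 1) {B : ℝ} (hB : 0 < B) (hBm : (m : ℝ) ≤ B)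
    {p : Fin m → ℝ} (hp : 0 ≤ p) (hpB : B ≤ occ a i (classif π a p)) :
    ∃ q, 0 ≤ q ∧ classif π a q ⊆ classif π a p ∧
      occ a i (classif π a q) ∈ Set.Ico B (2 * B) := by
  induction hN : (classif π a p).card using Nat.strong_induction_on generalizing p with
  | _ N ih =>
  by_cases h2B : occ a i (classif π a p) < 2 * B
  · exact ⟨p, hp, subset_rfl, hpB, h2B⟩
  obtain ⟨t₀, ht₀, ht₀i⟩ : ∃ t ∈ classif π a p, (0 : ℝ) < a t i :=
    Finset.exists_lt_of_sum_lt (by simp only [Finset.sum_const_zero]; unfold occ at h2B; linarith)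
  obtain ⟨q, hq, hqp, hcard⟩ :=
    exists_classif_ssubset_card_sdiff_le hgen (hai · |>.1) hp ht₀ ht₀i
  have hdrop := occ_le_occ_add_card_sdiff (hai · |>.2) hqp.subset
  have hcard' : ((classif π a p \ classif π a q).card : ℝ) ≤ m := by exact_mod_cast hcard
  obtain ⟨r, hr, hrq, hrB⟩ :=
    ih _ (hN ▸ Finset.card_lt_card hqp) hq (by linarith) rfl
  exact ⟨r, hr, hrq.trans hqp.subset, hrB⟩

end Sweep

section Boxes

variable {n m K : ℕ} (π : Fin n → ℝ) (a : Fin n → Fin m → ℝ) (C : Fin K → Finset (Fin n))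
  (i : Fin m) (c δ : ℝ)

def nonnegClassifs : Set (Finset (Fin n)) :=
  {x | ∃ p : Fin m → ℝ, (∀ j, 0 ≤ p j) ∧ x = classif π a p}

/-- `B_{i,j}^ℓ`, on the grid `gridInterval c δ`. -/
def boxSlice (j : Fin K) (ℓ : ℕ) : Set (Finset (Fin n)) :=
  {y | (∃ x ∈ nonnegClassifs π a, y = x ∩ C j) ∧ occ a i y ∈ gridInterval c δ ℓ}

variable {π a C i c δ}

lemma exists_boxSlice_levels (hai : ∀ t, 0 ≤ a t i) (hc : 0 < c) (hδ : 0 < δ)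
    {x : Finset (Fin n)} (hx : x ∈ nonnegClassifs π a) {N : ℕ}
    (hN : occ a i x < c * (1 + δ) ^ N) :
    ∃ v : Fin K → ℕ, (∀ j, v j ≤ N) ∧ ∀ j, x ∩ C j ∈ boxSlice π a C i c δ j (v j) := by
  have hocc_le : ∀ j, occ a i (x ∩ C j) ≤ occ a i x := fun j =>
    Finset.sum_le_sum_of_subset_of_nonneg Finset.inter_subset_left fun t _ _ => hai t
  obtain ⟨v, hv⟩ := exists_gridInterval_levels hc hδ
    (fun j => Finset.sum_nonneg fun t _ => hai t) fun j => (hocc_le j).trans_lt hN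
  exact ⟨v, fun j => (hv j).1, fun j => ⟨⟨x, hx, rfl⟩, (hv j).2⟩⟩

lemma occ_le_of_forall_mem_boxSlice (hC : ∀ u, ∃! j, u ∈ C j) (hc : 0 ≤ c) (hδ : 0 ≤ δ)
    {v : Fin K → ℕ} {S W : Finset (Fin n)}
    (hS : ∀ j, S ∩ C j ∈ boxSlice π a C i c δ j (v j))
    (hW : ∀ j, W ∩ C j ∈ boxSlice π a C i c δ j (v j)) :
    occ a i S ≤ (1 + δ) * occ a i W + K * c := by
  simpa [occ] using sum_le_of_forall_mem_gridInterval hC hc hδ (a · i) (fun j => (hS j).2)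
    fun j => (hW j).2

end Boxes

theorem box_extremes_are_witness_sets_general
    (n m K : ℕ) (hm : 1 ≤ m) (hK : m ≤ K)
    (π : Fin n → ℝ)
    (a : Fin n → Fin m → ℝ) (ha : ∀ t i, a t i ∈ Set.Icc (0:ℝ) 1)
    (B : ℝ) (hB : 0 < B) (hBm : (m : ℝ) ≤ B)
    (ε : ℝ) (hε : ε ∈ Set.Ioc (0:ℝ) 1)
    (hgen : ∀ p : Fin m → ℝ,
      (Finset.univ.filter fun t => π t = ∑ i, p i * a t i).card ≤ m)
    (C : Fin K → Finset (Fin n))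
    (hpart : ∀ u : Fin n, ∃! j : Fin K, u ∈ C j)
    (i : Fin m) :
    letI Lmax : ℕ := ⌈Real.logb (1 + ε / 4) (8 * K / ε)⌉₊
    letI Ival : ℕ → Set ℝ := fun ℓ =>
      if ℓ = 0 then Set.Ico 0 (ε * B / (4 * K))
      else Set.Ico (ε * B / (4 * K) * (1 + ε / 4) ^ (ℓ - 1))
        (ε * B / (4 * K) * (1 + ε / 4) ^ ℓ)
    letI XX : Set (Finset (Fin n)) :=
      {x | ∃ p : Fin m → ℝ, (∀ j, 0 ≤ p j) ∧ x = classif π a p}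
    letI Bij : Fin K → ℕ → Set (Finset (Fin n)) := fun j ℓ =>
      {y | (∃ x ∈ XX, y = x ∩ C j) ∧ occ a i y ∈ Ival ℓ}
    ∀ wlow whigh : (Fin K → ℕ) → Finset (Fin n),
    -- `wlow v` is the union over `j` of the inclusion-wise smallest element of
    -- `B_{i,j}^{v_j}` (characterized classwise, since the `C j` partition the
    -- index set):
    (∀ v : Fin K → ℕ, (∀ j, (Bij j (v j)).Nonempty) →
      ∀ j : Fin K, wlow v ∩ C j ∈ Bij j (v j) ∧
        ∀ z ∈ Bij j (v j), wlow v ∩ C j ⊆ z) →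
    -- `whigh v` is the union over `j` of the inclusion-wise largest element:
    (∀ v : Fin K → ℕ, (∀ j, (Bij j (v j)).Nonempty) →
      ∀ j : Fin K, whigh v ∩ C j ∈ Bij j (v j) ∧
        ∀ z ∈ Bij j (v j), z ⊆ whigh v ∩ C j) →
    letI Wp : Set (Finset (Fin n)) :=
      {w | ∃ v : Fin K → ℕ, (∀ j, v j ≤ Lmax) ∧
        (∃ x ∈ XX, ∀ j, x ∩ C j ∈ Bij j (v j)) ∧
        (1 - ε / 2) * B ≤ occ a i (wlow v) ∧ w = wlow v}
    letI Wm : Set (Finset (Fin n)) :=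
      {w | ∃ v : Fin K → ℕ, (∀ j, v j ≤ Lmax) ∧
        (∃ x ∈ XX, ∀ j, x ∩ C j ∈ Bij j (v j)) ∧
        occ a i (whigh v) ≤ (1 - 3 * ε / 2) * B ∧ w = whigh v}
    -- `Wp` is a witness set for `X_i^+` and `Wm` is a witness set for `X_i^-`:
    ((∀ w ∈ Wp, (1 - ε / 2) * B ≤ occ a i w) ∧
      (∀ x ∈ XX, B < occ a i x → ∃ w ∈ Wp, w ⊆ x)) ∧
    ((∀ w ∈ Wm, occ a i w ≤ (1 - 3 * ε / 2) * B) ∧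
      (∀ x ∈ XX, occ a i x < (1 - 3 * ε) * B → ∃ w ∈ Wm, x ⊆ w)) := by
  intro wlow whigh hwlow hwhigh
  obtain ⟨hε, -⟩ := hε
  have hK : 0 < K := by omega
  have hc : 0 < ε * B / (4 * K) := by positivity
  have hδ : 0 < ε / 4 := by positivity
  have hKc : K * (ε * B / (4 * K)) = ε * B / 4 := by field_simp
  have hLmax := two_mul_le_mul_pow_natCeil_logb hε hB hK
  refine ⟨⟨fun w ⟨_, _, _, hw, hwv⟩ => hwv ▸ hw, ?_⟩, fun w ⟨_, _, _, hw, hwv⟩ => hwv ▸ hw, ?_⟩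
  · rintro _ ⟨p, hp, rfl⟩ hpB
    obtain ⟨q, hq, hqp, hqB, hq2B⟩ :=
      exists_classif_subset_occ_mem_Ico hgen (ha · i) hB hBm hp hpB.le
    obtain ⟨v, hvL, hv⟩ :=
      exists_boxSlice_levels (C := C) (ha · i |>.1) hc hδ ⟨q, hq, rfl⟩ (hq2B.trans_le hLmax)
    obtain ⟨hwv, hwv_min⟩ := forall_and.mp (hwlow v fun j => ⟨_, hv j⟩)
    have hocc := hKc ▸ occ_le_of_forall_mem_boxSlice hpart hc.le hδ.le hv hwv
    refine ⟨wlow v, ⟨v, hvL, ⟨_, ⟨q, hq, rfl⟩, hv⟩, ?_, rfl⟩, ?_⟩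
    · nlinarith [mul_pos (mul_pos hε hε) hB]
    · exact subset_of_forall_inter_subset (fun u => (hpart u).exists) fun j =>
        (hwv_min j _ (hv j)).trans (Finset.inter_subset_left.trans hqp)
  · rintro _ ⟨p, hp, rfl⟩ hpB
    obtain ⟨v, hvL, hv⟩ := exists_boxSlice_levels (C := C) (ha · i |>.1) hc hδ ⟨p, hp, rfl⟩
      ((show occ a i (classif π a p) < 2 * B by nlinarith).trans_le hLmax)
    obtain ⟨hwv, hwv_max⟩ := forall_and.mp (hwhigh v fun j => ⟨_, hv j⟩)
    have hocc := hKc ▸ occ_le_of_forall_mem_boxSlice hpart hc.le hδ.le hwv hv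
    refine ⟨whigh v, ⟨v, hvL, ⟨_, ⟨p, hp, rfl⟩, hv⟩, ?_, rfl⟩, ?_⟩
    · nlinarith [mul_pos (mul_pos hε hε) hB]
    · exact subset_of_forall_inter_subset (fun u => (hpart u).exists) fun j =>
        (hwv_max j _ (hv j)).trans Finset.inter_subset_left

/-- The families `W_i^+` and `W_i^-` built from the smallest/largest elements
of the nonempty boxes `B_i^v` are witness sets for `X_i^+` and `X_i^-`. -/
theorem box_extremes_are_witness_sets
    (n m K : ℕ) (hn : 1 ≤ n) (hm : 1 ≤ m) (hK : m ≤ K)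
    (π : Fin n → ℝ) (hπ : ∀ t, 0 ≤ π t)
    (a : Fin n → Fin m → ℝ) (ha : ∀ t i, a t i ∈ Set.Icc (0:ℝ) 1)
    (ha0 : ∀ t, a t ≠ 0)
    (B : ℝ) (hB : 0 < B) (hBm : (m : ℝ) ≤ B)
    (ε : ℝ) (hε : ε ∈ Set.Ioc (0:ℝ) 1)
    (hgen : ∀ p : Fin m → ℝ,
      (Finset.univ.filter fun t => π t = ∑ i, p i * a t i).card ≤ m)
    (C : Fin K → Finset (Fin n))
    (hpart : ∀ u : Fin n, ∃! j : Fin K, u ∈ C j)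
    (hdir : ∀ j : Fin K, ∃ cdir : Fin m → ℝ, ‖cdir‖ = 1 ∧
      ∀ t ∈ C j, a t = ‖a t‖ • cdir)
    (hord : ∀ j : Fin K, ∀ t ∈ C j, ∀ t' ∈ C j, t < t' →
      π t' / ‖a t'‖ ≤ π t / ‖a t‖)
    (i : Fin m) :
    letI Lmax : ℕ := ⌈Real.logb (1 + ε / 4) (8 * K / ε)⌉₊
    letI Ival : ℕ → Set ℝ := fun ℓ =>
      if ℓ = 0 then Set.Ico 0 (ε * B / (4 * K))
      else Set.Ico (ε * B / (4 * K) * (1 + ε / 4) ^ (ℓ - 1))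
        (ε * B / (4 * K) * (1 + ε / 4) ^ ℓ)
    letI XX : Set (Finset (Fin n)) :=
      {x | ∃ p : Fin m → ℝ, (∀ j, 0 ≤ p j) ∧ x = classif π a p}
    letI Bij : Fin K → ℕ → Set (Finset (Fin n)) := fun j ℓ =>
      {y | (∃ x ∈ XX, y = x ∩ C j) ∧ occ a i y ∈ Ival ℓ}
    ∀ wlow whigh : (Fin K → ℕ) → Finset (Fin n),
    -- `wlow v` is the union over `j` of the inclusion-wise smallest element of
    -- `B_{i,j}^{v_j}` (characterized classwise, since the `C j` partition the
    -- index set):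
    (∀ v : Fin K → ℕ, (∀ j, (Bij j (v j)).Nonempty) →
      ∀ j : Fin K, wlow v ∩ C j ∈ Bij j (v j) ∧
        ∀ z ∈ Bij j (v j), wlow v ∩ C j ⊆ z) →
    -- `whigh v` is the union over `j` of the inclusion-wise largest element:
    (∀ v : Fin K → ℕ, (∀ j, (Bij j (v j)).Nonempty) →
      ∀ j : Fin K, whigh v ∩ C j ∈ Bij j (v j) ∧
        ∀ z ∈ Bij j (v j), z ⊆ whigh v ∩ C j) →
    letI Wp : Set (Finset (Fin n)) :=
      {w | ∃ v : Fin K → ℕ, (∀ j, v j ≤ Lmax) ∧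
        (∃ x ∈ XX, ∀ j, x ∩ C j ∈ Bij j (v j)) ∧
        (1 - ε / 2) * B ≤ occ a i (wlow v) ∧ w = wlow v}
    letI Wm : Set (Finset (Fin n)) :=
      {w | ∃ v : Fin K → ℕ, (∀ j, v j ≤ Lmax) ∧
        (∃ x ∈ XX, ∀ j, x ∩ C j ∈ Bij j (v j)) ∧
        occ a i (whigh v) ≤ (1 - 3 * ε / 2) * B ∧ w = whigh v}
    -- `Wp` is a witness set for `X_i^+` and `Wm` is a witness set for `X_i^-`:
    ((∀ w ∈ Wp, (1 - ε / 2) * B ≤ occ a i w) ∧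
      (∀ x ∈ XX, B < occ a i x → ∃ w ∈ Wp, w ⊆ x)) ∧
    ((∀ w ∈ Wm, occ a i w ≤ (1 - 3 * ε / 2) * B) ∧
      (∀ x ∈ XX, occ a i x < (1 - 3 * ε) * B → ∃ w ∈ Wm, x ⊆ w)) :=
  box_extremes_are_witness_sets_general n m K hm hK π a ha B hB hBm ε hε hgen C hpart i

end
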